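/- Path-formula invariance under cycle-bisimulation: let K_1 and K_2 be Kripke structures, B a cycle-bisimulation between them, and π_1, π_2 paths of K_1 and K_2 respectively that are bisimilar w.r.t. B (i.e., ((π_1)_i, (π_2)_i) ∈ B for all i ∈ ℕ). Then for every Cycle-CTL* path formula ψ and every position i ∈ ℕ, K_1, π_1, i ⊨ ψ if and only if K_2, π_2, i ⊨ ψ. -/

import Mathlib

/-!
By simultaneous induction, `B`-related worlds satisfy the same state formulas and pointwise
`B`-related paths the same path formulas. For the path quantifiers one matches the paths (resp.
cycles) starting at two related worlds with pointwise related ones: paths are lifted step by step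
with the forth and back clauses, cycles are matched directly by the cycle clauses.
-/

namespace CycleCTL

universe u v

/-- A Kripke structure over a set `AP` of atomic propositions. -/
structure Kripke (AP : Type) : Type (u + 1) where
  World : Type u
  init : World
  R : World → World → Prop
  label : World → Set AP
  serial : ∀ w, ∃ v, R w v

variable {AP : Type}

/-- An (infinite) path of a Kripke structure. -/
def IsPath (K : Kripke.{u} AP) (π : ℕ → K.World) : Prop :=
  ∀ i, K.R (π i) (π (i + 1))

/-- A cycle: a path visiting its first world infinitely often. -/
def IsCycle (K : Kripke.{u} AP) (π : ℕ → K.World) : Prop :=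
  IsPath K π ∧ ∀ i, ∃ j, i < j ∧ π j = π 0

mutual
  /-- State formulas of Cycle-CTL*. -/
  inductive StateForm (AP : Type) : Type where
    | atom : AP → StateForm AP
    | not  : StateForm AP → StateForm AP
    | and  : StateForm AP → StateForm AP → StateForm AP
    | or   : StateForm AP → StateForm AP → StateForm AP
    | E    : PathForm AP → StateForm AP
    | A    : PathForm AP → StateForm AP
    | Ec   : PathForm AP → StateForm AP
    | Ac   : PathForm AP → StateForm AP
  /-- Path formulas of Cycle-CTL*. -/
  inductive PathForm (AP : Type) : Type where
    | state : StateForm AP → PathForm AP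
    | not   : PathForm AP → PathForm AP
    | and   : PathForm AP → PathForm AP → PathForm AP
    | or    : PathForm AP → PathForm AP → PathForm AP
    | next  : PathForm AP → PathForm AP
    | untl  : PathForm AP → PathForm AP → PathForm AP
end

mutual
  /-- Satisfaction of a state formula at a world. -/
  def SatS (K : Kripke.{u} AP) : K.World → StateForm AP → Prop
    | w, .atom p => p ∈ K.label w
    | w, .not φ => ¬ SatS K w φ
    | w, .and φ₁ φ₂ => SatS K w φ₁ ∧ SatS K w φ₂
    | w, .or φ₁ φ₂ => SatS K w φ₁ ∨ SatS K w φ₂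
    | w, .E ψ => ∃ π, IsPath K π ∧ π 0 = w ∧ SatP K π 0 ψ
    | w, .A ψ => ∀ π, IsPath K π → π 0 = w → SatP K π 0 ψ
    | w, .Ec ψ => ∃ π, IsCycle K π ∧ π 0 = w ∧ SatP K π 0 ψ
    | w, .Ac ψ => ∀ π, IsCycle K π → π 0 = w → SatP K π 0 ψ
  /-- Satisfaction of a path formula on a path at a position. -/
  def SatP (K : Kripke.{u} AP) : (ℕ → K.World) → ℕ → PathForm AP → Prop
    | π, i, .state φ => SatS K (π i) φ
    | π, i, .not ψ => ¬ SatP K π i ψ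
    | π, i, .and ψ₁ ψ₂ => SatP K π i ψ₁ ∧ SatP K π i ψ₂
    | π, i, .or ψ₁ ψ₂ => SatP K π i ψ₁ ∨ SatP K π i ψ₂
    | π, i, .next ψ => SatP K π (i + 1) ψ
    | π, i, .untl ψ₁ ψ₂ => ∃ k, SatP K π (i + k) ψ₂ ∧ ∀ j < k, SatP K π (i + j) ψ₁
end

/-- `K ⊨ φ` : satisfaction at the initial world. -/
def Sat (K : Kripke.{u} AP) (φ : StateForm AP) : Prop := SatS K K.init φ

/-- `⊤` as a path formula, abbreviating `p ∨ ¬p`. -/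
def topP (p : AP) : PathForm AP := .or (.state (.atom p)) (.not (.state (.atom p)))

/-- `F ψ` abbreviates `⊤ U ψ`. -/
def FP (p : AP) (ψ : PathForm AP) : PathForm AP := .untl (topP p) ψ

/-- `G ψ` abbreviates `¬(⊤ U ¬ψ)`. -/
def GP (p : AP) (ψ : PathForm AP) : PathForm AP := .not (FP p (.not ψ))


/-- A cycle-bisimulation between two Kripke structures. -/
def IsCycleBisim (K₁ : Kripke.{u} AP) (K₂ : Kripke.{v} AP)
    (B : K₁.World → K₂.World → Prop) : Prop :=
  B K₁.init K₂.init ∧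
  ∀ w₁ w₂, B w₁ w₂ →
    (K₁.label w₁ = K₂.label w₂) ∧
    (∀ v₁, K₁.R w₁ v₁ → ∃ v₂, K₂.R w₂ v₂ ∧ B v₁ v₂) ∧
    (∀ v₂, K₂.R w₂ v₂ → ∃ v₁, K₁.R w₁ v₁ ∧ B v₁ v₂) ∧
    (∀ π₁, IsCycle K₁ π₁ → π₁ 0 = w₁ →
      ∃ π₂, IsCycle K₂ π₂ ∧ π₂ 0 = w₂ ∧ ∀ i, B (π₁ i) (π₂ i)) ∧
    (∀ π₂, IsCycle K₂ π₂ → π₂ 0 = w₂ →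
      ∃ π₁, IsCycle K₁ π₁ ∧ π₁ 0 = w₁ ∧ ∀ i, B (π₁ i) (π₂ i))

variable {K₁ : Kripke.{u} AP} {K₂ : Kripke.{v} AP}

def IsCycleBisimRel (K₁ : Kripke.{u} AP) (K₂ : Kripke.{v} AP)
    (B : K₁.World → K₂.World → Prop) : Prop :=
  ∀ w₁ w₂, B w₁ w₂ →
    (K₁.label w₁ = K₂.label w₂) ∧
    (∀ v₁, K₁.R w₁ v₁ → ∃ v₂, K₂.R w₂ v₂ ∧ B v₁ v₂) ∧
    (∀ v₂, K₂.R w₂ v₂ → ∃ v₁, K₁.R w₁ v₁ ∧ B v₁ v₂) ∧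
    (∀ π₁, IsCycle K₁ π₁ → π₁ 0 = w₁ →
      ∃ π₂, IsCycle K₂ π₂ ∧ π₂ 0 = w₂ ∧ ∀ i, B (π₁ i) (π₂ i)) ∧
    (∀ π₂, IsCycle K₂ π₂ → π₂ 0 = w₂ →
      ∃ π₁, IsCycle K₁ π₁ ∧ π₁ 0 = w₁ ∧ ∀ i, B (π₁ i) (π₂ i))

theorem IsCycleBisim.isCycleBisimRel {B : K₁.World → K₂.World → Prop}
    (hB : IsCycleBisim K₁ K₂ B) : IsCycleBisimRel K₁ K₂ B :=
  hB.2

section Matched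

variable {α β : Type*}

def Matched (B : α → β → Prop) (P₁ : (ℕ → α) → Prop) (P₂ : (ℕ → β) → Prop) : Prop :=
  (∀ π₁, P₁ π₁ → ∃ π₂, P₂ π₂ ∧ ∀ i, B (π₁ i) (π₂ i)) ∧
    (∀ π₂, P₂ π₂ → ∃ π₁, P₁ π₁ ∧ ∀ i, B (π₁ i) (π₂ i))

variable {B : α → β → Prop} {P₁ : (ℕ → α) → Prop} {P₂ : (ℕ → β) → Prop}
  {Q₁ : (ℕ → α) → Prop} {Q₂ : (ℕ → β) → Prop}

theorem Matched.exists_iff (hP : Matched B P₁ P₂)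
    (hQ : ∀ π₁ π₂, (∀ i, B (π₁ i) (π₂ i)) → (Q₁ π₁ ↔ Q₂ π₂)) :
    (∃ π₁, P₁ π₁ ∧ Q₁ π₁) ↔ ∃ π₂, P₂ π₂ ∧ Q₂ π₂ := by
  constructor
  · rintro ⟨π₁, hP₁, hQ₁⟩
    obtain ⟨π₂, hP₂, hB⟩ := hP.1 π₁ hP₁
    exact ⟨π₂, hP₂, (hQ π₁ π₂ hB).1 hQ₁⟩
  · rintro ⟨π₂, hP₂, hQ₂⟩
    obtain ⟨π₁, hP₁, hB⟩ := hP.2 π₂ hP₂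
    exact ⟨π₁, hP₁, (hQ π₁ π₂ hB).2 hQ₂⟩

theorem Matched.forall_iff (hP : Matched B P₁ P₂)
    (hQ : ∀ π₁ π₂, (∀ i, B (π₁ i) (π₂ i)) → (Q₁ π₁ ↔ Q₂ π₂)) :
    (∀ π₁, P₁ π₁ → Q₁ π₁) ↔ ∀ π₂, P₂ π₂ → Q₂ π₂ := by
  simpa only [not_exists, not_and, not_not] using
    not_congr (hP.exists_iff (Q₁ := fun π => ¬ Q₁ π) fun π₁ π₂ h => not_congr (hQ π₁ π₂ h))

end Matched

theorem IsPath.exists_rel_of_forth {S : K₁.World → K₂.World → Prop}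
    (forth : ∀ w₁ w₂, S w₁ w₂ → ∀ v₁, K₁.R w₁ v₁ → ∃ v₂, K₂.R w₂ v₂ ∧ S v₁ v₂)
    {π₁ : ℕ → K₁.World} (hπ₁ : IsPath K₁ π₁) {w₂ : K₂.World} (hw : S (π₁ 0) w₂) :
    ∃ π₂, IsPath K₂ π₂ ∧ π₂ 0 = w₂ ∧ ∀ i, S (π₁ i) (π₂ i) := by
  choose next next_R next_S using fun n v (hv : S (π₁ n) v) => forth _ v hv _ (hπ₁ n)
  let π₂ : ∀ n, {v // S (π₁ n) v} :=
    fun n => Nat.rec ⟨w₂, hw⟩ (fun n v => ⟨next n v v.2, next_S n v v.2⟩) n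
  exact ⟨fun n => (π₂ n).1, fun n => next_R n _ (π₂ n).2, rfl, fun n => (π₂ n).2⟩

namespace IsCycleBisimRel

variable {B : K₁.World → K₂.World → Prop}

theorem matched_paths (hB : IsCycleBisimRel K₁ K₂ B)
    {w₁ : K₁.World} {w₂ : K₂.World} (hw : B w₁ w₂) :
    Matched B (fun π => IsPath K₁ π ∧ π 0 = w₁) (fun π => IsPath K₂ π ∧ π 0 = w₂) := by
  constructor
  · rintro π₁ ⟨hπ₁, rfl⟩
    obtain ⟨π₂, hπ₂, h0, hπ⟩ := hπ₁.exists_rel_of_forth (fun w₁ w₂ h => (hB w₁ w₂ h).2.1) hw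
    exact ⟨π₂, ⟨hπ₂, h0⟩, hπ⟩
  · rintro π₂ ⟨hπ₂, rfl⟩
    obtain ⟨π₁, hπ₁, h0, hπ⟩ :=
      hπ₂.exists_rel_of_forth (S := flip B) (fun w₂ w₁ h => (hB w₁ w₂ h).2.2.1) hw
    exact ⟨π₁, ⟨hπ₁, h0⟩, hπ⟩

theorem matched_cycles (hB : IsCycleBisimRel K₁ K₂ B)
    {w₁ : K₁.World} {w₂ : K₂.World} (hw : B w₁ w₂) :
    Matched B (fun π => IsCycle K₁ π ∧ π 0 = w₁) (fun π => IsCycle K₂ π ∧ π 0 = w₂) := by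
  obtain ⟨-, -, -, forth, back⟩ := hB w₁ w₂ hw
  exact ⟨fun π₁ ⟨hπ₁, h0⟩ => (forth π₁ hπ₁ h0).imp fun _ ⟨hπ₂, h0, hπ⟩ => ⟨⟨hπ₂, h0⟩, hπ⟩,
    fun π₂ ⟨hπ₂, h0⟩ => (back π₂ hπ₂ h0).imp fun _ ⟨hπ₁, h0, hπ⟩ => ⟨⟨hπ₁, h0⟩, hπ⟩⟩

mutual

theorem satS_iff (hB : IsCycleBisimRel K₁ K₂ B)
    {w₁ : K₁.World} {w₂ : K₂.World} (hw : B w₁ w₂) :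
    ∀ φ : StateForm AP, SatS K₁ w₁ φ ↔ SatS K₂ w₂ φ
  | .atom p => by simp only [SatS, (hB w₁ w₂ hw).1]
  | .not φ => not_congr (hB.satS_iff hw φ)
  | .and φ₁ φ₂ => and_congr (hB.satS_iff hw φ₁) (hB.satS_iff hw φ₂)
  | .or φ₁ φ₂ => or_congr (hB.satS_iff hw φ₁) (hB.satS_iff hw φ₂)
  | .E ψ => by
    simpa only [SatS, and_assoc] using
      (hB.matched_paths hw).exists_iff fun π₁ π₂ hπ => hB.satP_iff hπ ψ 0
  | .A ψ => by
    simpa only [SatS, and_imp] using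
      (hB.matched_paths hw).forall_iff fun π₁ π₂ hπ => hB.satP_iff hπ ψ 0
  | .Ec ψ => by
    simpa only [SatS, and_assoc] using
      (hB.matched_cycles hw).exists_iff fun π₁ π₂ hπ => hB.satP_iff hπ ψ 0
  | .Ac ψ => by
    simpa only [SatS, and_imp] using
      (hB.matched_cycles hw).forall_iff fun π₁ π₂ hπ => hB.satP_iff hπ ψ 0

theorem satP_iff (hB : IsCycleBisimRel K₁ K₂ B) {π₁ : ℕ → K₁.World} {π₂ : ℕ → K₂.World}
    (hπ : ∀ i, B (π₁ i) (π₂ i)) :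
    ∀ (ψ : PathForm AP) (i : ℕ), SatP K₁ π₁ i ψ ↔ SatP K₂ π₂ i ψ
  | .state φ, i => hB.satS_iff (hπ i) φ
  | .not ψ, i => not_congr (hB.satP_iff hπ ψ i)
  | .and ψ₁ ψ₂, i => and_congr (hB.satP_iff hπ ψ₁ i) (hB.satP_iff hπ ψ₂ i)
  | .or ψ₁ ψ₂, i => or_congr (hB.satP_iff hπ ψ₁ i) (hB.satP_iff hπ ψ₂ i)
  | .next ψ, i => hB.satP_iff hπ ψ (i + 1)
  | .untl ψ₁ ψ₂, i => exists_congr fun k =>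
    and_congr (hB.satP_iff hπ ψ₂ (i + k)) (forall₂_congr fun j _ => hB.satP_iff hπ ψ₁ (i + j))

end

end IsCycleBisimRel

/-- path-formula invariance under cycle-bisimulation: bisimilar paths satisfy the
same path formulas at every position. -/
theorem stmt7 {AP : Type} (K₁ : Kripke.{u} AP) (K₂ : Kripke.{v} AP)
    (B : K₁.World → K₂.World → Prop) (hB : IsCycleBisim K₁ K₂ B)
    (π₁ : ℕ → K₁.World) (π₂ : ℕ → K₂.World)
    (h₁ : IsPath K₁ π₁) (h₂ : IsPath K₂ π₂) (hbis : ∀ i, B (π₁ i) (π₂ i)) :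
    ∀ (ψ : PathForm AP) (i : ℕ), SatP K₁ π₁ i ψ ↔ SatP K₂ π₂ i ψ :=
  hB.isCycleBisimRel.satP_iff hbis

end CycleCTL
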